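/- For ω ~ N(0, σ²) with σ > 0, the variance of the capped fluctuation min(ω, ω̄) is strictly less than σ² for every finite cap ω̄ ∈ ℝ, and Var(min(ω, ω̄)) → σ² as ω̄ → ∞. -/

import Mathlib

/-!
Since `Var[Y] ≤ 𝔼[Y²]` and variance is shift invariant, it suffices to compare
`Y = min ω ω̄ - min 0 ω̄` with `ω`: the map `x ↦ min x ω̄ - min 0 ω̄` is 1-Lipschitz and fixes `0`,
so `|Y| ≤ |ω|`, strictly on `(max ω̄ 0, ∞)`, which has positive Gaussian mass; hence
`Var[min ω ω̄] < 𝔼[ω²] = σ²`. As `ω̄ → ∞`, `min ω ω̄ → ω` pointwise with `|min ω ω̄| ≤ |ω|` once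
`ω̄ ≥ 0`, so dominated convergence in the first two moments gives the limit.
-/

open MeasureTheory ProbabilityTheory Filter Set Topology
open scoped NNReal

theorem MeasureTheory.integral_lt_integral_of_ae_le_of_measure_setOf_lt_ne_zero
    {α : Type*} [MeasurableSpace α] {μ : Measure α} {f g : α → ℝ}
    (hf : Integrable f μ) (hg : Integrable g μ) (hfg : f ≤ᵐ[μ] g)
    (hlt : μ {x | f x < g x} ≠ 0) :
    ∫ x, f x ∂μ < ∫ x, g x ∂μ := by
  rw [← sub_pos, ← integral_sub hg hf]
  refine (integral_pos_iff_support_of_nonneg_ae (f := g - f)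
    (by filter_upwards [hfg] with x hx using sub_nonneg.2 hx) (hg.sub hf)).2 ?_
  exact (pos_iff_ne_zero.2 hlt).trans_le <| measure_mono fun x hx => sub_ne_zero.2 (ne_of_gt hx)

namespace ProbabilityTheory

variable {Ω : Type*} [MeasurableSpace Ω] {μ : Measure Ω} [IsProbabilityMeasure μ]

theorem variance_lt_integral_sq_of_abs_le {X Y : Ω → ℝ} (hX : MemLp X 2 μ)
    (hY : AEStronglyMeasurable Y μ) (hle : ∀ᵐ ω ∂μ, |Y ω| ≤ |X ω|)
    (hlt : μ {ω | |Y ω| < |X ω|} ≠ 0) :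
    variance Y μ < ∫ ω, X ω ^ 2 ∂μ := by
  have hY2 : MemLp Y 2 μ := hX.of_le hY hle
  refine (variance_le_expectation_sq hY).trans_lt ?_
  refine integral_lt_integral_of_ae_le_of_measure_setOf_lt_ne_zero hY2.integrable_sq
    hX.integrable_sq (by filter_upwards [hle] with ω h using sq_le_sq.2 h) ?_
  simpa only [Pi.pow_apply, sq_lt_sq] using hlt

theorem tendsto_variance_of_dominated {ι : Type*} {l : Filter ι} [l.IsCountablyGenerated]
    {Y : ι → Ω → ℝ} {X : Ω → ℝ} (hX : MemLp X 2 μ)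
    (hY : ∀ᶠ i in l, AEStronglyMeasurable (Y i) μ)
    (hbound : ∀ᶠ i in l, ∀ᵐ ω ∂μ, |Y i ω| ≤ |X ω|)
    (hlim : ∀ᵐ ω ∂μ, Tendsto (fun i => Y i ω) l (𝓝 (X ω))) :
    Tendsto (fun i => variance (Y i) μ) l (𝓝 (variance X μ)) := by
  have hmean : Tendsto (fun i => μ[Y i]) l (𝓝 μ[X]) :=
    tendsto_integral_filter_of_dominated_convergence (fun ω => |X ω|) hY hbound
      (hX.integrable one_le_two).abs hlim
  have hsq : Tendsto (fun i => μ[Y i ^ 2]) l (𝓝 μ[X ^ 2]) := by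
    refine tendsto_integral_filter_of_dominated_convergence (fun ω => X ω ^ 2)
      (hY.mono fun i h => h.pow 2) ?_ hX.integrable_sq ?_
    · filter_upwards [hbound] with i hi
      filter_upwards [hi] with ω h
      simpa [sq_abs] using sq_le_sq.2 h
    · filter_upwards [hlim] with ω h using h.pow 2
  rw [variance_eq_sub hX]
  refine (hsq.sub (hmean.pow 2)).congr' ?_
  filter_upwards [hY, hbound] with i hYi hi
  rw [variance_eq_sub (hX.of_le hYi hi)]

theorem integral_sq_gaussianReal (m : ℝ) (v : ℝ≥0) :
    ∫ x, x ^ 2 ∂gaussianReal m v = m ^ 2 + v := by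
  have h := variance_eq_sub (memLp_id_gaussianReal' (μ := m) (v := v) 2 (by simp))
  rw [variance_id_gaussianReal] at h
  simp only [id, Pi.pow_apply] at h
  rw [integral_id_gaussianReal] at h
  linarith

theorem gaussianReal_Ioi_ne_zero (m : ℝ) {v : ℝ≥0} (hv : v ≠ 0) (a : ℝ) :
    gaussianReal m v (Ioi a) ≠ 0 :=
  mt (fun h => gaussianReal_absolutelyContinuous' m hv h) (by simp)

end ProbabilityTheory

theorem abs_min_sub_min_zero_le (x c : ℝ) : |min x c - min 0 c| ≤ |x| := by
  simpa using abs_min_sub_min_le_max x c 0 c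

theorem abs_min_sub_min_zero_lt {x c : ℝ} (h : max c 0 < x) : |min x c - min 0 c| < |x| := by
  rw [max_lt_iff] at h
  rw [min_eq_right h.1.le, abs_of_pos h.2]
  rcases le_total c 0 with hc | hc
  · simpa [min_eq_right hc] using h.2
  · simpa [min_eq_left hc, abs_of_nonneg hc] using h.1

/-- For `ω ~ N(0, σ²)` with `σ > 0`, the variance of `min(ω, ω̄)` is
strictly less than `σ²` for every finite cap `ω̄`, and tends to `σ²` as `ω̄ → ∞`. -/
theorem capped_variance (σ : ℝ) (hσ : 0 < σ) :
    (∀ ωbar : ℝ,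
        variance (fun ω => min ω ωbar) (gaussianReal 0 (Real.toNNReal (σ ^ 2)))
          < σ ^ 2) ∧
      Tendsto
        (fun ωbar : ℝ =>
          variance (fun ω => min ω ωbar) (gaussianReal 0 (Real.toNNReal (σ ^ 2))))
        atTop (nhds (σ ^ 2)) := by
  set v := (σ ^ 2).toNNReal
  have hv : (v : ℝ) = σ ^ 2 := Real.coe_toNNReal _ (by positivity)
  have hid : MemLp (fun x : ℝ => x) 2 (gaussianReal 0 v) := memLp_id_gaussianReal' 2 (by simp)
  constructor
  · intro c
    have hsq : ∫ x, x ^ 2 ∂gaussianReal 0 v = σ ^ 2 := by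
      rw [integral_sq_gaussianReal, hv, zero_pow two_ne_zero, zero_add]
    rw [← variance_sub_const (by fun_prop) (min 0 c), ← hsq]
    exact variance_lt_integral_sq_of_abs_le hid (by fun_prop)
      (ae_of_all _ fun x => abs_min_sub_min_zero_le x c)
      (ne_bot_of_le_ne_bot (gaussianReal_Ioi_ne_zero 0 (by positivity) (max c 0))
        (measure_mono fun x hx => abs_min_sub_min_zero_lt hx))
  · rw [← hv, ← variance_fun_id_gaussianReal (μ := 0)]
    refine tendsto_variance_of_dominated hid (.of_forall fun c => by fun_prop) ?_
      (ae_of_all _ fun x => tendsto_const_nhds.congr' ?_)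
    · filter_upwards [eventually_ge_atTop 0] with c hc
      exact ae_of_all _ fun x => by simpa [min_eq_left hc] using abs_min_sub_min_zero_le x c
    · filter_upwards [eventually_ge_atTop x] with c hc
      rw [min_eq_left hc]
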